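/- arXiv:1603.08504 — 3 statements merged into one kernel-verified Lean document; each statement's English description precedes it below -/
import Mathlib

section
/- Let α > 0, β > 0 be real numbers. Then for all z ∈ (0,∞) the Turán type inequality 𝔼_{α,β}(z)·𝔼_{α,β+2}(z) − [𝔼_{α,β+1}(z)]² ≥ 0 holds. -/
/-- The Mittag-Leffler function `E_{α,β}(z) = ∑_{n=0}^∞ z^n / Γ(α n + β)`. -/
noncomputable def mittagLeffler (α β z : ℝ) : ℝ :=
  ∑' n : ℕ, z ^ n / Real.Gamma (α * n + β)

/-- The normalized Mittag-Leffler function `𝔼_{α,β}(z) = Γ(β) E_{α,β}(z)`. -/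
noncomputable def mittagLefflerNorm (α β z : ℝ) : ℝ :=
  Real.Gamma β * mittagLeffler α β z

/-!
Write `𝔼_{α,β}(z) = ∑ aₙ(β)` with `aₙ(β) = Γ(β) zⁿ / Γ(αn + β)`. By `Γ(s + 1) = s Γ(s)`,
`aₙ(β+1)² / (aₙ(β) aₙ(β+2)) = β (x + 1) / ((β + 1) x)` with `x = αn + β ≥ β`, which is `≤ 1`.
So the inequality holds term by term, and Cauchy–Schwarz for nonnegative series sums it up.
The series converge because, with `αk ≥ 1`, `Γ(αn + β) ≥ (⌊n/k⌋ - 1)!` beats every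
geometric sequence.
-/

open Filter Topology Real
open scoped Nat

theorem Real.factorial_sub_one_le_Gamma {m : ℕ} {x : ℝ} (hm : 2 ≤ m) (hx : (m : ℝ) ≤ x) :
    ((m - 1)! : ℝ) ≤ Gamma x := by
  obtain ⟨j, rfl⟩ : ∃ j, m = j + 1 := ⟨m - 1, by omega⟩
  have h2 : (2 : ℝ) ≤ j + 1 := by exact_mod_cast hm
  push_cast at hx
  rw [Nat.add_sub_cancel, ← Gamma_nat_eq_factorial]
  exact Gamma_strictMonoOn_Ici.monotoneOn h2 (h2.trans hx) hx

theorem tendsto_pow_div_Gamma_mul_add {α β : ℝ} (hα : 0 < α) (hβ : 0 < β) (R : ℝ) :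
    Tendsto (fun n : ℕ => R ^ n / Gamma (α * n + β)) atTop (𝓝 0) := by
  obtain ⟨k, hk⟩ : ∃ k : ℕ, 1 ≤ α * k := ⟨⌈α⁻¹⌉₊, by
    calc 1 = α * α⁻¹ := (mul_inv_cancel₀ hα.ne').symm
    _ ≤ α * ⌈α⁻¹⌉₊ := by gcongr; exact Nat.le_ceil _⟩
  have hk0 : 0 < k := Nat.pos_of_ne_zero (by rintro rfl; simp at hk; linarith)
  set M := max |R| 1
  have hq : Tendsto (· / k) atTop atTop := Nat.tendsto_div_const_atTop hk0.ne'
  refine squeeze_zero_norm' ?_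
    ((FloorSemiring.tendsto_mul_pow_div_factorial_sub_atTop (M ^ k) (M ^ k) 1).comp hq)
  filter_upwards [hq.eventually_ge_atTop 2] with n hn
  have hqx : ((n / k : ℕ) : ℝ) ≤ α * n + β := by
    calc ((n / k : ℕ) : ℝ) ≤ α * k * (n / k : ℕ) := le_mul_of_one_le_left (by positivity) hk
    _ = α * ((k * (n / k) : ℕ) : ℝ) := by push_cast; ring
    _ ≤ α * n := by gcongr; exact_mod_cast Nat.mul_div_le n k
    _ ≤ α * n + β := by linarith
  have hpow : |R| ^ n ≤ M ^ k * (M ^ k) ^ (n / k) := by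
    calc |R| ^ n ≤ M ^ n := by gcongr; exact le_max_left _ _
    _ ≤ M ^ (k * (n / k + 1)) :=
        pow_le_pow_right₀ (le_max_right _ _) (Nat.lt_mul_div_succ n hk0).le
    _ = M ^ k * (M ^ k) ^ (n / k) := by rw [pow_mul, pow_succ']
  rw [norm_div, norm_pow, Real.norm_eq_abs,
    Real.norm_of_nonneg (Gamma_pos_of_pos (by positivity)).le]
  exact div_le_div₀ (by positivity) hpow (by positivity) (factorial_sub_one_le_Gamma hn hqx)

theorem summable_pow_div_Gamma_mul_add {α β : ℝ} (hα : 0 < α) (hβ : 0 < β) (z : ℝ) :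
    Summable fun n : ℕ => z ^ n / Gamma (α * n + β) := by
  refine .of_norm_bounded_eventually_nat summable_geometric_two ?_
  filter_upwards [(tendsto_pow_div_Gamma_mul_add hα hβ (2 * z)).norm.eventually_le_const
    (by simp : ‖(0 : ℝ)‖ < 1)] with n hn
  calc ‖z ^ n / Gamma (α * n + β)‖ = (1 / 2) ^ n * ‖(2 * z) ^ n / Gamma (α * n + β)‖ := by
        rw [mul_pow, mul_div_assoc, norm_mul, norm_pow, ← mul_assoc, ← mul_pow]
        norm_num
  _ ≤ (1 / 2) ^ n := mul_le_of_le_one_right (by positivity) hn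

theorem tsum_sq_le_tsum_mul_tsum_of_sq_le_mul {ι : Type*} {r f g : ι → ℝ}
    (hf : ∀ i, 0 ≤ f i) (hg : ∀ i, 0 ≤ g i) (hfs : Summable f) (hgs : Summable g)
    (hr : ∀ i, r i ^ 2 ≤ f i * g i) : (∑' i, r i) ^ 2 ≤ (∑' i, f i) * ∑' i, g i := by
  have hrs : Summable r := by
    refine ((hfs.add hgs).div_const 2).of_norm_bounded fun i => ?_
    rw [Real.norm_eq_abs]
    exact abs_le_of_sq_le_sq (by nlinarith [hr i, sq_nonneg (f i - g i)])
      (by linarith [hf i, hg i])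
  exact le_of_tendsto_of_tendsto' (hrs.hasSum.pow 2) (Tendsto.mul hfs.hasSum hgs.hasSum)
    fun s => Finset.sum_sq_le_sum_mul_sum_of_sq_le_mul s (fun i _ => hf i) (fun i _ => hg i)
      fun i _ => hr i

theorem Real.Gamma_add_one_div_sq_le {β x : ℝ} (hβ : 0 < β) (hβx : β ≤ x) :
    (Gamma (β + 1) / Gamma (x + 1)) ^ 2 ≤
      Gamma β / Gamma x * (Gamma (β + 2) / Gamma (x + 2)) := by
  have hx := hβ.trans_le hβx
  have hΓβ := Gamma_pos_of_pos hβ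
  have hΓx := Gamma_pos_of_pos hx
  rw [show β + 2 = β + 1 + 1 by ring, show x + 2 = x + 1 + 1 by ring,
    Gamma_add_one (by positivity : β + 1 ≠ 0), Gamma_add_one (by positivity : x + 1 ≠ 0),
    Gamma_add_one hβ.ne', Gamma_add_one hx.ne', div_pow,
    div_le_iff₀ (by positivity)]
  field_simp
  nlinarith

noncomputable def mittagLefflerNormTerm (α β z : ℝ) (n : ℕ) : ℝ :=
  Gamma β * (z ^ n / Gamma (α * n + β))

theorem mittagLefflerNorm_eq_tsum (α β z : ℝ) :
    mittagLefflerNorm α β z = ∑' n, mittagLefflerNormTerm α β z n := by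
  rw [mittagLefflerNorm, mittagLeffler, ← tsum_mul_left]
  rfl

theorem mittagLefflerNormTerm_nonneg {α β z : ℝ} (hα : 0 ≤ α) (hβ : 0 < β) (hz : 0 ≤ z)
    (n : ℕ) : 0 ≤ mittagLefflerNormTerm α β z n := by
  have := Gamma_pos_of_pos hβ
  have := Gamma_pos_of_pos (by positivity : 0 < α * n + β)
  unfold mittagLefflerNormTerm
  positivity

theorem summable_mittagLefflerNormTerm {α β : ℝ} (hα : 0 < α) (hβ : 0 < β) (z : ℝ) :
    Summable (mittagLefflerNormTerm α β z) :=
  (summable_pow_div_Gamma_mul_add hα hβ z).mul_left _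

theorem mittagLefflerNormTerm_sq_le {α β : ℝ} (hα : 0 ≤ α) (hβ : 0 < β) (z : ℝ) (n : ℕ) :
    mittagLefflerNormTerm α (β + 1) z n ^ 2 ≤
      mittagLefflerNormTerm α β z n * mittagLefflerNormTerm α (β + 2) z n := by
  set x := α * n + β
  have hβx : β ≤ x := le_add_of_nonneg_left (by positivity)
  simp only [mittagLefflerNormTerm, ← add_assoc]
  calc _ = (z ^ n) ^ 2 * (Gamma (β + 1) / Gamma (x + 1)) ^ 2 := by ring
  _ ≤ (z ^ n) ^ 2 * (Gamma β / Gamma x * (Gamma (β + 2) / Gamma (x + 2))) := by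
      gcongr
      exact Gamma_add_one_div_sq_le hβ hβx
  _ = _ := by ring

/-- Turán type inequality for the normalized Mittag-Leffler function. -/
theorem mittagLefflerNorm_turan (α β : ℝ) (hα : 0 < α) (hβ : 0 < β) :
    ∀ z : ℝ, 0 < z →
      mittagLefflerNorm α β z * mittagLefflerNorm α (β + 2) z -
        (mittagLefflerNorm α (β + 1) z) ^ 2 ≥ 0 := by
  intro z hz
  rw [mittagLefflerNorm_eq_tsum, mittagLefflerNorm_eq_tsum, mittagLefflerNorm_eq_tsum,
    ge_iff_le, sub_nonneg]
  exact tsum_sq_le_tsum_mul_tsum_of_sq_le_mul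
    (mittagLefflerNormTerm_nonneg hα.le hβ hz.le)
    (mittagLefflerNormTerm_nonneg hα.le (by positivity) hz.le)
    (summable_mittagLefflerNormTerm hα hβ z) (summable_mittagLefflerNormTerm hα (by positivity) z)
    (mittagLefflerNormTerm_sq_le hα.le hβ z)
end

section
/- Let α > 0 and β₁, β₂ > 1 be real numbers. If β₁ < β₂, then the function z ↦ E_{α,β₁}(z) / E_{α,β₂}(z) is increasing on (0,∞); if β₂ < β₁, then this function is decreasing on (0,∞). -/
/-!
The coefficients of `E_{α,β}` are `1 / Γ(α n + β)`. By log-convexity of `Γ`, their quotient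
`Γ(α n + β₂) / Γ(α n + β₁)` for `E_{α,β₁}` over `E_{α,β₂}` is monotone in `n` when `β₁ < β₂`.
For power series with nonnegative coefficients whose quotient is monotone, pairing the terms
`(i, j)` and `(j, i)` of the double series shows that the quotient of the sums is monotone
on `(0, ∞)`.
-/

open Real Filter

section ConvexOn

variable {𝕜 : Type*} [Field 𝕜] [LinearOrder 𝕜] [IsStrictOrderedRing 𝕜] {s : Set 𝕜} {f : 𝕜 → 𝕜}

/-- Both `x + d` and `y` are convex combinations of `x` and `y + d`, with swapped weights. -/
theorem ConvexOn.map_add_add_map_le (hf : ConvexOn 𝕜 s f) {x y d : 𝕜} (hx : x ∈ s)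
    (hyd : y + d ∈ s) (hxy : x ≤ y) (hd : 0 ≤ d) : f (x + d) + f y ≤ f x + f (y + d) := by
  rcases (add_nonneg (sub_nonneg.2 hxy) hd).eq_or_lt with hL | hL
  · obtain ⟨rfl, rfl⟩ : y = x ∧ d = 0 := ⟨by linarith, by linarith⟩
    simp
  have hw : 0 ≤ (y - x) / (y - x + d) := div_nonneg (sub_nonneg.2 hxy) hL.le
  have hw' : 0 ≤ d / (y - x + d) := div_nonneg hd hL.le
  have hsum : (y - x) / (y - x + d) + d / (y - x + d) = 1 := by field_simp
  have h₁ := hf.2 hx hyd hw hw' hsum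
  have h₂ := hf.2 hx hyd hw' hw (by rw [add_comm, hsum])
  simp only [smul_eq_mul] at h₁ h₂
  have e₁ : (y - x) / (y - x + d) * x + d / (y - x + d) * (y + d) = x + d := by field_simp; ring
  have e₂ : d / (y - x + d) * x + (y - x) / (y - x + d) * (y + d) = y := by field_simp; ring
  rw [e₁] at h₁
  rw [e₂] at h₂
  linear_combination h₁ + h₂ + (f x + f (y + d)) * hsum

end ConvexOn

theorem Real.Gamma_add_mul_Gamma_le {s t d : ℝ} (hs : 0 < s) (hst : s ≤ t) (hd : 0 ≤ d) :
    Gamma (s + d) * Gamma t ≤ Gamma s * Gamma (t + d) := by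
  have ht : 0 < t := hs.trans_le hst
  have hlog := convexOn_log_Gamma.map_add_add_map_le hs (show 0 < t + d by linarith) hst hd
  simp only [Function.comp_apply] at hlog
  rw [← log_le_log_iff (by positivity) (by positivity),
    log_mul (by positivity) (by positivity), log_mul (by positivity) (by positivity)]
  exact hlog

/-- The slope of `log ∘ Gamma` on `[t - 1, t]` is `log (t - 1)`; convexity bounds the slope on
`[t, t + a]` from below by it. -/
theorem Real.Gamma_mul_rpow_le_Gamma_add {t a : ℝ} (ht : 1 < t) (ha : 0 < a) :
    Gamma t * (t - 1) ^ a ≤ Gamma (t + a) := by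
  have ht₁ : 0 < t - 1 := by linarith
  have hslope := convexOn_log_Gamma.slope_mono_adjacent (show t - 1 ∈ Set.Ioi 0 from ht₁)
    (show t + a ∈ Set.Ioi 0 by simp only [Set.mem_Ioi]; linarith) (sub_one_lt t)
    (lt_add_of_pos_right t ha)
  have hstep : log (Gamma t) = log (t - 1) + log (Gamma (t - 1)) := by
    rw [← log_mul ht₁.ne' (Gamma_pos_of_pos ht₁).ne', ← Gamma_add_one ht₁.ne', sub_add_cancel]
  simp only [Function.comp_apply, hstep, sub_sub_cancel, add_sub_cancel_left] at hslope
  rw [← log_le_log_iff (by positivity) (by positivity), log_mul (by positivity) (by positivity),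
    log_rpow ht₁]
  have := (le_div_iff₀ ha).1 (by simpa using hslope)
  linarith

theorem summable_pow_div_Gamma {α β : ℝ} (hα : 0 < α) (hβ : 0 < β) (x : ℝ) :
    Summable fun n : ℕ => x ^ n / Gamma (α * n + β) := by
  have hlin : Tendsto (fun n : ℕ => α * n + β - 1) atTop atTop :=
    tendsto_atTop_add_const_right _ _ <| tendsto_atTop_add_const_right _ _ <|
      tendsto_natCast_atTop_atTop.const_mul_atTop hα
  have hlarge : ∀ᶠ n : ℕ in atTop, 0 < α * n + β - 1 ∧ 2 * |x| ≤ (α * n + β - 1) ^ α :=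
    (hlin.eventually_gt_atTop 0).and
      (((tendsto_rpow_atTop hα).comp hlin).eventually_ge_atTop (2 * |x|))
  refine summable_of_ratio_norm_eventually_le (r := 1 / 2) (by norm_num) ?_
  filter_upwards [hlarge] with n ⟨ht, hx⟩
  have hΓ := Gamma_mul_rpow_le_Gamma_add (t := α * n + β) (by linarith) hα
  have hΓpos : 0 < Gamma (α * n + β) := Gamma_pos_of_pos (by linarith)
  rw [Nat.cast_succ, show α * (n + 1) + β = α * n + β + α by ring]
  have hΓpos' : 0 < Gamma (α * n + β + α) := Gamma_pos_of_pos (by linarith)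
  simp only [norm_div, norm_pow, norm_eq_abs, abs_of_pos hΓpos, abs_of_pos hΓpos']
  calc |x| ^ (n + 1) / Gamma (α * n + β + α)
      ≤ |x| ^ (n + 1) / (Gamma (α * n + β) * (α * n + β - 1) ^ α) := by gcongr
    _ = |x| / (α * n + β - 1) ^ α * (|x| ^ n / Gamma (α * n + β)) := by ring
    _ ≤ 1 / 2 * (|x| ^ n / Gamma (α * n + β)) := by
      gcongr ?_ * _
      rw [div_le_iff₀ (by positivity)]
      linarith

theorem mittagLeffler_pos {α β x : ℝ} (hα : 0 < α) (hβ : 0 < β) (hx : 0 ≤ x) :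
    0 < mittagLeffler α β x :=
  (summable_pow_div_Gamma hα hβ x).tsum_pos
    (fun n => div_nonneg (pow_nonneg hx n) (Gamma_pos_of_pos (by positivity)).le) 0
    (by simpa using Gamma_pos_of_pos hβ)

theorem pow_mul_pow_le_pow_mul_pow {R : Type*} [CommSemiring R] [PartialOrder R]
    [IsOrderedRing R] {x y : R} (hx : 0 ≤ x) (hxy : x ≤ y) {i j : ℕ} (hji : j ≤ i) :
    x ^ i * y ^ j ≤ y ^ i * x ^ j := by
  have hy := hx.trans hxy
  obtain ⟨k, rfl⟩ := Nat.exists_eq_add_of_le hji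
  calc x ^ (j + k) * y ^ j = (x * y) ^ j * x ^ k := by ring
    _ ≤ (x * y) ^ j * y ^ k := by gcongr
    _ = y ^ (j + k) * x ^ j := by ring

/-- Expanding both products as double series, the sum of the terms at `(i, j)` and `(j, i)` of
the difference is `(a i * b j - a j * b i) * (y ^ i * x ^ j - x ^ i * y ^ j)`, a product of two
factors with the sign of `i - j`. -/
theorem tsum_mul_pow_mul_tsum_mul_pow_le {a b : ℕ → ℝ} {x y : ℝ} (ha : ∀ n, 0 ≤ a n)
    (hb : ∀ n, 0 ≤ b n) (hab : ∀ ⦃m k : ℕ⦄, m ≤ k → a m * b k ≤ a k * b m)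
    (hx : 0 ≤ x) (hxy : x ≤ y) (hax : Summable fun n => a n * x ^ n)
    (hay : Summable fun n => a n * y ^ n) (hbx : Summable fun n => b n * x ^ n)
    (hby : Summable fun n => b n * y ^ n) :
    (∑' n, a n * x ^ n) * (∑' n, b n * y ^ n) ≤ (∑' n, a n * y ^ n) * (∑' n, b n * x ^ n) := by
  have hy : 0 ≤ y := hx.trans hxy
  have hF := hax.mul_of_nonneg hby (fun n => mul_nonneg (ha n) (pow_nonneg hx n))
    (fun n => mul_nonneg (hb n) (pow_nonneg hy n))
  have hG := hay.mul_of_nonneg hbx (fun n => mul_nonneg (ha n) (pow_nonneg hy n))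
    (fun n => mul_nonneg (hb n) (pow_nonneg hx n))
  rw [hax.tsum_mul_tsum hby hF, hay.tsum_mul_tsum hbx hG, ← sub_nonneg, ← hG.tsum_sub hF]
  set c : ℕ × ℕ → ℝ := fun p =>
    a p.1 * y ^ p.1 * (b p.2 * x ^ p.2) - a p.1 * x ^ p.1 * (b p.2 * y ^ p.2)
  have hc : Summable c := hG.sub hF
  have hsymm : ∀ p : ℕ × ℕ, 0 ≤ c p + c p.swap := by
    rintro ⟨i, j⟩
    have hpair : c (i, j) + c (j, i) =
        (a i * b j - a j * b i) * (y ^ i * x ^ j - x ^ i * y ^ j) := by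
      simp only [c]; ring
    rw [Prod.swap_prod_mk, hpair]
    rcases le_total j i with hji | hij
    · exact mul_nonneg (sub_nonneg.2 (hab hji))
        (sub_nonneg.2 (pow_mul_pow_le_pow_mul_pow hx hxy hji))
    · refine mul_nonneg_of_nonpos_of_nonpos (sub_nonpos.2 (hab hij)) (sub_nonpos.2 ?_)
      linarith [pow_mul_pow_le_pow_mul_pow hx hxy hij]
  have hswap : ∑' p : ℕ × ℕ, c p.swap = ∑' p, c p := (Equiv.prodComm ℕ ℕ).tsum_eq c
  have htwice : 0 ≤ 2 * ∑' p, c p :=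
    calc 0 ≤ ∑' p : ℕ × ℕ, (c p + c p.swap) := tsum_nonneg hsymm
      _ = 2 * ∑' p, c p := by
        rw [hc.tsum_add hc.prod_symm, hswap, two_mul]
  linarith

theorem mittagLeffler_mul_le_mul {α β β' x y : ℝ} (hα : 0 < α) (hβ : 0 < β) (hββ' : β ≤ β')
    (hx : 0 ≤ x) (hxy : x ≤ y) :
    mittagLeffler α β x * mittagLeffler α β' y ≤ mittagLeffler α β y * mittagLeffler α β' x := by
  have hβ' : 0 < β' := hβ.trans_le hββ'
  have hΓ {γ : ℝ} (hγ : 0 < γ) (n : ℕ) : 0 < Gamma (α * n + γ) := Gamma_pos_of_pos (by positivity)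
  have hsum {γ : ℝ} (hγ : 0 < γ) (z : ℝ) :
      Summable fun n : ℕ => (Gamma (α * n + γ))⁻¹ * z ^ n := by
    simpa only [div_eq_inv_mul] using summable_pow_div_Gamma hα hγ z
  have hcoeff ⦃m k : ℕ⦄ (hmk : m ≤ k) :
      (Gamma (α * m + β))⁻¹ * (Gamma (α * k + β'))⁻¹ ≤
        (Gamma (α * k + β))⁻¹ * (Gamma (α * m + β'))⁻¹ := by
    rw [← mul_inv, ← mul_inv]
    refine inv_anti₀ (by positivity) ?_
    have := Gamma_add_mul_Gamma_le (by positivity : 0 < α * m + β)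
      (show α * m + β ≤ α * k + β by gcongr) (sub_nonneg.2 hββ')
    rwa [add_add_sub_cancel, add_add_sub_cancel, mul_comm] at this
  simpa only [mittagLeffler, div_eq_inv_mul] using
    tsum_mul_pow_mul_tsum_mul_pow_le (fun n => (inv_pos.2 (hΓ hβ n)).le)
      (fun n => (inv_pos.2 (hΓ hβ' n)).le) hcoeff hx hxy (hsum hβ x) (hsum hβ y)
      (hsum hβ' x) (hsum hβ' y)

/-- Monotonicity of ratios of Mittag-Leffler functions in the second parameter. -/
theorem mittagLeffler_ratio_monotone (α β₁ β₂ : ℝ) (hα : 0 < α)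
    (hβ₁ : 1 < β₁) (hβ₂ : 1 < β₂) :
    (β₁ < β₂ → MonotoneOn (fun z : ℝ => mittagLeffler α β₁ z / mittagLeffler α β₂ z)
      (Set.Ioi 0)) ∧
    (β₂ < β₁ → AntitoneOn (fun z : ℝ => mittagLeffler α β₁ z / mittagLeffler α β₂ z)
      (Set.Ioi 0)) := by
  have hpos {β : ℝ} (hβ : 1 < β) {z : ℝ} (hz : z ∈ Set.Ioi 0) : 0 < mittagLeffler α β z :=
    mittagLeffler_pos hα (by linarith) (le_of_lt hz)
  refine ⟨fun hβ x hx y hy hxy => ?_, fun hβ x hx y hy hxy => ?_⟩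
  · rw [div_le_div_iff₀ (hpos hβ₂ hx) (hpos hβ₂ hy)]
    exact mittagLeffler_mul_le_mul hα (by linarith) hβ.le (le_of_lt hx) hxy
  · rw [div_le_div_iff₀ (hpos hβ₂ hy) (hpos hβ₂ hx)]
    linarith [mittagLeffler_mul_le_mul hα (by linarith) hβ.le (le_of_lt hx) hxy]
end

section
/- Let α > 0 and β₁, β₂ be real numbers with β₂ > β₁ > 1. Then the Turán type inequality E_{α,β₂}(z)·E_{α,β₁−1}(z) − E_{α,β₁}(z)·E_{α,β₂−1}(z) + (β₂−β₁)·E_{α,β₁}(z)·E_{α,β₂}(z) ≥ 0 holds for all z > 0. -/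
open Real Filter Set

theorem ConvexOn.map_add_sub_map_le {𝕜 : Type*} [Field 𝕜] [LinearOrder 𝕜] [IsStrictOrderedRing 𝕜]
    {s : Set 𝕜} {f : 𝕜 → 𝕜} (hf : ConvexOn 𝕜 s f) {x y δ : 𝕜} (hx : x ∈ s) (hyδ : y + δ ∈ s)
    (hxy : x ≤ y) (hδ : 0 ≤ δ) : f (x + δ) - f x ≤ f (y + δ) - f y := by
  rcases hδ.eq_or_lt with rfl | hδ
  · simp
  rcases hxy.eq_or_lt with rfl | hxy
  · rfl
  have hmem : Icc x (y + δ) ⊆ s := hf.1.ordConnected.out hx hyδ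
  have h₁ : slope f x (x + δ) ≤ slope f x (y + δ) :=
    hf.slope_mono hx ⟨hmem ⟨by linarith, by linarith⟩, (show x < x + δ by linarith).ne'⟩
      ⟨hyδ, (show x < y + δ by linarith).ne'⟩ (by linarith)
  have h₂ : slope f (y + δ) x ≤ slope f (y + δ) y :=
    hf.slope_mono hyδ ⟨hx, (show x < y + δ by linarith).ne⟩
      ⟨hmem ⟨hxy.le, by linarith⟩, (show y < y + δ by linarith).ne⟩ hxy.le
  rw [slope_comm f (y + δ) x, slope_comm f (y + δ) y] at h₂
  have h := h₁.trans h₂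
  rwa [slope_def_field, slope_def_field, add_sub_cancel_left, add_sub_cancel_left,
    div_le_div_iff_of_pos_right hδ] at h

namespace Real

/-- Also true at `s = 0`, where `Γ 0 = 0` and `0⁻¹ = 0`. -/
theorem inv_Gamma_eq_self_mul_inv_Gamma_add_one (s : ℝ) : (Gamma s)⁻¹ = s * (Gamma (s + 1))⁻¹ := by
  rcases ne_or_eq s 0 with h | rfl
  · rw [Gamma_add_one h, mul_inv, mul_inv_cancel_left₀ h]
  · rw [zero_add, Gamma_zero, inv_zero, zero_mul]

theorem Gamma_add_mul_Gamma_le_s7 {x y δ : ℝ} (hx : 0 < x) (hxy : x ≤ y) (hδ : 0 ≤ δ) :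
    Gamma (x + δ) * Gamma y ≤ Gamma x * Gamma (y + δ) := by
  have hΓx := Gamma_pos_of_pos hx
  have hΓy := Gamma_pos_of_pos (hx.trans_le hxy)
  have hΓxδ := Gamma_pos_of_pos (show 0 < x + δ by linarith)
  have hΓyδ := Gamma_pos_of_pos (show 0 < y + δ by linarith)
  have h := convexOn_log_Gamma.map_add_sub_map_le hx (show 0 < y + δ by linarith) hxy hδ
  simp only [Function.comp_apply] at h
  rw [← log_le_log_iff (by positivity) (by positivity), log_mul hΓxδ.ne' hΓy.ne',
    log_mul hΓx.ne' hΓyδ.ne']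
  linarith

theorem rpow_mul_Gamma_le_Gamma_add {x α : ℝ} (hx : 1 < x) (hα : 0 < α) :
    (x - 1) ^ α * Gamma x ≤ Gamma (x + α) := by
  have h := convexOn_log_Gamma.slope_mono_adjacent (x := x - 1) (y := x) (z := x + α)
    (show 0 < x - 1 by linarith) (show 0 < x + α by linarith) (by linarith) (by linarith)
  have hΓ₀ : 0 < Gamma (x - 1) := Gamma_pos_of_pos (by linarith)
  have hΓ : 0 < Gamma x := Gamma_pos_of_pos (by linarith)
  have hlog : log (Gamma x) = log (x - 1) + log (Gamma (x - 1)) := by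
    rw [← log_mul (by linarith) hΓ₀.ne', ← Gamma_add_one (by linarith), sub_add_cancel]
  simp only [Function.comp_apply, sub_sub_cancel, div_one, add_sub_cancel_left] at h
  rw [le_div_iff₀ hα, hlog, add_sub_cancel_right] at h
  rw [← log_le_log_iff (by positivity) (Gamma_pos_of_pos (by linarith)),
    log_mul (by positivity) hΓ.ne', log_rpow (by linarith)]
  linarith

end Real

theorem tsum_mul_tsum_mul_le_of_cross_nonneg {ι : Type*} {f g u : ι → ℝ} (hf : Summable f)
    (hg : Summable g) (huf : Summable fun i => u i * f i) (hug : Summable fun i => u i * g i)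
    (h : ∀ i j, 0 ≤ (u j - u i) * (g i * f j - f i * g j)) :
    (∑' i, f i) * ∑' i, u i * g i ≤ (∑' i, g i) * ∑' i, u i * f i := by
  rw [← summable_norm_iff] at hf hg huf hug
  set H : ι × ι → ℝ := fun p => g p.1 * (u p.2 * f p.2) - f p.1 * (u p.2 * g p.2)
  have hH : Summable H := (summable_mul_of_summable_norm hg huf).sub
    (summable_mul_of_summable_norm hf hug)
  have hdiff : (∑' i, g i) * (∑' i, u i * f i) - (∑' i, f i) * ∑' i, u i * g i = ∑' p, H p := by
    rw [tsum_mul_tsum_of_summable_norm hg huf, tsum_mul_tsum_of_summable_norm hf hug,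
      ← (summable_mul_of_summable_norm hg huf).tsum_sub (summable_mul_of_summable_norm hf hug)]
  have hswap : ∑' p : ι × ι, H p.swap = ∑' p, H p := (Equiv.prodComm ι ι).tsum_eq H
  have hpair : ∀ p : ι × ι, H p + H p.swap = (u p.2 - u p.1) * (g p.1 * f p.2 - f p.1 * g p.2) :=
    fun p => by simp only [H, Prod.fst_swap, Prod.snd_swap]; ring
  have hsym : 0 ≤ ∑' p : ι × ι, (H p + H p.swap) :=
    tsum_nonneg fun p => (hpair p).symm ▸ h p.1 p.2
  rw [hH.tsum_add hH.prod_symm, hswap] at hsym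
  linarith

noncomputable def mittagLefflerTerm (α β z : ℝ) (n : ℕ) : ℝ :=
  z ^ n / Gamma (α * n + β)

theorem mittagLeffler_eq_tsum (α β z : ℝ) :
    mittagLeffler α β z = ∑' n, mittagLefflerTerm α β z n := rfl

theorem summable_mittagLefflerTerm {α : ℝ} (hα : 0 < α) (β z : ℝ) :
    Summable (mittagLefflerTerm α β z) := by
  have hw : Tendsto (fun n : ℕ => α * n + β) atTop atTop :=
    tendsto_atTop_add_const_right _ β (tendsto_natCast_atTop_atTop.const_mul_atTop hα)
  have hpow : Tendsto (fun n : ℕ => (α * n + β - 1) ^ α) atTop atTop :=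
    (tendsto_rpow_atTop hα).comp (tendsto_atTop_add_const_right _ (-1) hw)
  refine summable_of_ratio_norm_eventually_le (r := 1 / 2) (by norm_num) ?_
  filter_upwards [hw.eventually_gt_atTop 1, hpow.eventually_ge_atTop (2 * |z|)] with n hn hzn
  have hΓ : 0 < Gamma (α * n + β) := Gamma_pos_of_pos (by linarith)
  have hratio : 2 * |z| * Gamma (α * n + β) ≤ Gamma (α * n + β + α) :=
    (mul_le_mul_of_nonneg_right hzn hΓ.le).trans (rpow_mul_Gamma_le_Gamma_add hn hα)
  have hΓ' : 0 < Gamma (α * n + β + α) := Gamma_pos_of_pos (by linarith)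
  simp only [mittagLefflerTerm, norm_div, norm_pow, Real.norm_eq_abs, abs_of_pos hΓ,
    Nat.cast_succ, mul_add, mul_one, add_right_comm _ α β, abs_of_pos hΓ']
  rw [div_le_iff₀ hΓ', pow_succ]
  calc |z| ^ n * |z| ≤ |z| ^ n * (Gamma (α * n + β + α) / (2 * Gamma (α * n + β))) :=
        mul_le_mul_of_nonneg_left (by rw [le_div_iff₀ (by positivity)]; linarith) (by positivity)
    _ = 1 / 2 * (|z| ^ n / Gamma (α * n + β)) * Gamma (α * n + β + α) := by ring

theorem mittagLefflerTerm_sub_one (α β z : ℝ) (n : ℕ) :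
    mittagLefflerTerm α (β - 1) z n =
      α * n * mittagLefflerTerm α β z n + (β - 1) * mittagLefflerTerm α β z n := by
  simp only [mittagLefflerTerm, div_eq_mul_inv]
  rw [show α * n + (β - 1) = α * n + β - 1 by ring,
    inv_Gamma_eq_self_mul_inv_Gamma_add_one, sub_add_cancel]
  ring

theorem summable_mul_mittagLefflerTerm {α : ℝ} (hα : 0 < α) (β z : ℝ) :
    Summable fun n : ℕ => α * n * mittagLefflerTerm α β z n := by
  refine ((summable_mittagLefflerTerm hα (β - 1) z).sub
    ((summable_mittagLefflerTerm hα β z).mul_left (β - 1))).congr fun n => ?_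
  rw [mittagLefflerTerm_sub_one]
  ring

theorem mittagLeffler_sub_one {α : ℝ} (hα : 0 < α) (β z : ℝ) :
    mittagLeffler α (β - 1) z =
      ∑' n : ℕ, α * n * mittagLefflerTerm α β z n + (β - 1) * mittagLeffler α β z := by
  simp only [mittagLeffler_eq_tsum, mittagLefflerTerm_sub_one]
  rw [(summable_mul_mittagLefflerTerm hα β z).tsum_add
    ((summable_mittagLefflerTerm hα β z).mul_left (β - 1)), tsum_mul_left]

theorem mittagLefflerTerm_mul_le {α β₁ β₂ z : ℝ} (hα : 0 ≤ α) (hβ₁ : 0 < β₁) (hβ : β₁ ≤ β₂)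
    (hz : 0 ≤ z) {j k : ℕ} (hjk : j ≤ k) :
    mittagLefflerTerm α β₁ z j * mittagLefflerTerm α β₂ z k ≤
      mittagLefflerTerm α β₂ z j * mittagLefflerTerm α β₁ z k := by
  have hj : 0 < α * j + β₁ := by positivity
  have hjk' : α * j + β₁ ≤ α * k + β₁ := by gcongr
  have hΓ : Gamma (α * j + β₂) * Gamma (α * k + β₁) ≤ Gamma (α * j + β₁) * Gamma (α * k + β₂) := by
    simpa only [add_add_sub_cancel] using Gamma_add_mul_Gamma_le_s7 hj hjk' (sub_nonneg.2 hβ)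
  simp only [mittagLefflerTerm, div_mul_div_comm]
  exact div_le_div_of_nonneg_left (by positivity)
    (mul_pos (Gamma_pos_of_pos (by linarith)) (Gamma_pos_of_pos (by linarith))) hΓ

theorem mittagLefflerTerm_cross_nonneg {α β₁ β₂ z : ℝ} (hα : 0 ≤ α) (hβ₁ : 0 < β₁)
    (hβ : β₁ ≤ β₂) (hz : 0 ≤ z) (j k : ℕ) :
    0 ≤ (α * k - α * j) * (mittagLefflerTerm α β₂ z j * mittagLefflerTerm α β₁ z k -
      mittagLefflerTerm α β₁ z j * mittagLefflerTerm α β₂ z k) := by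
  rcases le_total j k with hjk | hkj
  · exact mul_nonneg (sub_nonneg.2 (by gcongr))
      (sub_nonneg.2 (mittagLefflerTerm_mul_le hα hβ₁ hβ hz hjk))
  · have h := mittagLefflerTerm_mul_le hα hβ₁ hβ hz hkj
    rw [mul_comm (mittagLefflerTerm α β₁ z k), mul_comm (mittagLefflerTerm α β₂ z k)] at h
    exact mul_nonneg_of_nonpos_of_nonpos (sub_nonpos.2 (by gcongr)) (sub_nonpos.2 h)

/-- Turán type inequality for Mittag-Leffler functions with two parameters. -/
theorem mittagLeffler_turan_two_params (α β₁ β₂ : ℝ) (hα : 0 < α)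
    (hβ₁ : 1 < β₁) (hβ : β₁ < β₂) :
    ∀ z : ℝ, 0 < z →
      mittagLeffler α β₂ z * mittagLeffler α (β₁ - 1) z -
          mittagLeffler α β₁ z * mittagLeffler α (β₂ - 1) z +
          (β₂ - β₁) * mittagLeffler α β₁ z * mittagLeffler α β₂ z ≥ 0 := by
  intro z hz
  have key := tsum_mul_tsum_mul_le_of_cross_nonneg (summable_mittagLefflerTerm hα β₁ z)
    (summable_mittagLefflerTerm hα β₂ z) (summable_mul_mittagLefflerTerm hα β₁ z)
    (summable_mul_mittagLefflerTerm hα β₂ z)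
    (mittagLefflerTerm_cross_nonneg hα.le (by linarith) hβ.le hz.le)
  simp only [← mittagLeffler_eq_tsum] at key
  rw [mittagLeffler_sub_one hα, mittagLeffler_sub_one hα]
  linear_combination key
end
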